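/- Let J^α (α = 1,2,3) be an almost hypercomplex structure on an open set U ⊆ ℝ^{4r}, and suppose symmetric connection coefficients Γ_{XY}^Z and functions ω_X^α satisfy the quaternionic covariant-constancy condition ∂_X J^α_Y^Z − Γ_{XY}^W J^α_W^Z + Γ_{XW}^Z J^α_Y^W + 2 ε^{αβγ} ω_X^β J^γ_Y^Z = 0 on U. Then for any smooth one-form ξ_W on U, the shifted pair Γ'_{XY}^Z := Γ_{XY}^Z + ξ_X δ_Y^Z + δ_X^Z ξ_Y − Σ_α ( J^α_X^W ξ_W J^α_Y^Z + J^α_X^Z J^α_Y^W ξ_W ) and ω'_X^α := ω_X^α + J^α_X^W ξ_W also satisfies the same quaternionic covariant-constancy condition (and Γ' is again symmetric). Hence the affine and SU(2) connections of a quaternionic structure are only defined up to this one-parameter family of shifts. -/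

import Mathlib

noncomputable section

/-- The Levi-Civita symbol on `Fin 3`, with `ε 0 1 2 = 1`. -/
def epsLC (a b c : Fin 3) : ℝ :=
  if (a, b, c) = ((0 : Fin 3), (1 : Fin 3), (2 : Fin 3)) ∨ (a, b, c) = (1, 2, 0) ∨ (a, b, c) = (2, 0, 1) then 1
  else if (a, b, c) = (2, 1, 0) ∨ (a, b, c) = (0, 2, 1) ∨ (a, b, c) = (1, 0, 2) then -1
  else 0

/-- Partial derivative `∂_i f` of a scalar function on `ℝ^n`. -/
def pd {n : ℕ} (i : Fin n) (f : (Fin n → ℝ) → ℝ) (x : Fin n → ℝ) : ℝ :=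
  fderiv ℝ f x (Pi.single i 1)

/-- The diagonal Nijenhuis tensor `N_{XY}^Z` of a triple of (1,1)-tensor fields. -/
def nijenhuis {n : ℕ} (J : Fin 3 → Fin n → Fin n → (Fin n → ℝ) → ℝ)
    (X Y Z : Fin n) (x : Fin n → ℝ) : ℝ :=
  (1 / 12) * ∑ α, ∑ W,
    (J α X W x * (pd W (J α Y Z) x - pd Y (J α W Z) x)
      - J α Y W x * (pd W (J α X Z) x - pd X (J α W Z) x))

/-- The Obata connection `Γ^{Ob}_{XY}^Z` of a triple of (1,1)-tensor fields. -/
def obata {n : ℕ} (J : Fin 3 → Fin n → Fin n → (Fin n → ℝ) → ℝ)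
    (X Y Z : Fin n) (x : Fin n → ℝ) : ℝ :=
  -(1 / 6) * ∑ α, ∑ W,
    ((pd X (J α Y W) x + pd Y (J α X W) x
        + (1 / 2) * ∑ β, ∑ γ, epsLC α β γ *
            ((∑ u, J β X u x * pd u (J γ Y W) x) + ∑ u, J β Y u x * pd u (J γ X W) x))
      * J α W Z x)

/-- An almost hypercomplex structure on an open set `U ⊆ ℝ^n`: a smooth family of three
(1,1)-tensor fields forming at every point of `U` a quaternionic triple. -/
def IsAlmostHypercomplexOn {n : ℕ} (J : Fin 3 → Fin n → Fin n → (Fin n → ℝ) → ℝ)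
    (U : Set (Fin n → ℝ)) : Prop :=
  (∀ α X Y, ContDiffOn ℝ (⊤ : ℕ∞) (J α X Y) U) ∧
  ∀ α β X Z, ∀ x ∈ U, ∑ W, J α X W x * J β W Z x =
    (if α = β then (-1 : ℝ) else 0) * (if X = Z then 1 else 0)
      + ∑ γ, epsLC α β γ * J γ X Z x

/-- The shifted affine connection
`Γ'_{XY}^Z = Γ_{XY}^Z + ξ_X δ_Y^Z + δ_X^Z ξ_Y − Σ_α (J^α_X^W ξ_W J^α_Y^Z + J^α_X^Z J^α_Y^W ξ_W)`. -/
def gammaShift {n : ℕ} (Γ : Fin n → Fin n → Fin n → (Fin n → ℝ) → ℝ)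
    (J : Fin 3 → Fin n → Fin n → (Fin n → ℝ) → ℝ)
    (ξ : Fin n → (Fin n → ℝ) → ℝ) (X Y Z : Fin n) (x : Fin n → ℝ) : ℝ :=
  Γ X Y Z x + ξ X x * (if Y = Z then 1 else 0) + (if X = Z then (1 : ℝ) else 0) * ξ Y x
    - ∑ α, ((∑ W, J α X W x * ξ W x) * J α Y Z x + J α X Z x * (∑ W, J α Y W x * ξ W x))

/-- The shifted SU(2) connection `ω'_X^α = ω_X^α + J^α_X^W ξ_W`. -/
def omegaShift {n : ℕ} (ω : Fin 3 → Fin n → (Fin n → ℝ) → ℝ)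
    (J : Fin 3 → Fin n → Fin n → (Fin n → ℝ) → ℝ)
    (ξ : Fin n → (Fin n → ℝ) → ℝ) (α : Fin 3) (X : Fin n) (x : Fin n → ℝ) : ℝ :=
  ω α X x + ∑ W, J α X W x * ξ W x

/-!
Both the covariant-constancy condition and the shift are affine in `(Γ, ω)`, so it suffices that
the shift itself, the tensor `S_{XY}^Z` together with `η^β_X = J^β_X^W ξ_W`, satisfies the
condition with the `∂J` term dropped. This is pointwise linear algebra in a quaternionic triple:
contracting `S` with `J^α` on either side produces `J^β J^α` and `J^α J^β`, whose commutator
`2 ε^{αβγ} J^γ` is exactly cancelled by the `ω`-shift, and the remaining terms cancel by the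
quaternion relations and the cyclic symmetry of `ε`.
-/

lemma epsLC_swap (α β γ : Fin 3) : epsLC β α γ = -epsLC α β γ := by
  fin_cases α <;> fin_cases β <;> fin_cases γ <;> norm_num [epsLC, Prod.ext_iff, Fin.ext_iff]

lemma epsLC_cycle (α β γ : Fin 3) : epsLC γ α β = epsLC α β γ := by
  fin_cases α <;> fin_cases β <;> fin_cases γ <;> norm_num [epsLC, Prod.ext_iff, Fin.ext_iff]

section QuaternionicTriple

open Matrix

variable {ι : Type*} [Fintype ι]

def connectionTerm (a : Fin 3 → Matrix ι ι ℝ) (G : ι → ι → ι → ℝ) (θ : Fin 3 → ι → ℝ)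
    (α : Fin 3) (X Y Z : ι) : ℝ :=
  -(∑ W, G X Y W * a α W Z) + ∑ W, G X W Z * a α Y W
    + 2 * ∑ β, ∑ γ, epsLC α β γ * θ β X * a γ Y Z

lemma connectionTerm_add (a : Fin 3 → Matrix ι ι ℝ) (G G' : ι → ι → ι → ℝ)
    (θ θ' : Fin 3 → ι → ℝ) (α : Fin 3) (X Y Z : ι) :
    connectionTerm a (G + G') (θ + θ') α X Y Z
      = connectionTerm a G θ α X Y Z + connectionTerm a G' θ' α X Y Z := by
  simp only [connectionTerm, Pi.add_apply, add_mul, mul_add, Finset.sum_add_distrib]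
  ring

variable [DecidableEq ι]

def IsQuaternionicTriple (a : Fin 3 → Matrix ι ι ℝ) : Prop :=
  ∀ α β, a α * a β = (if α = β then (-1 : ℝ) else 0) • 1 + ∑ γ, epsLC α β γ • a γ

def shiftTensor (a : Fin 3 → Matrix ι ι ℝ) (ξ : ι → ℝ) (X Y Z : ι) : ℝ :=
  ξ X * (if Y = Z then 1 else 0) + (if X = Z then 1 else 0) * ξ Y
    - ∑ β, ((a β *ᵥ ξ) X * a β Y Z + a β X Z * (a β *ᵥ ξ) Y)

lemma shiftTensor_comm (a : Fin 3 → Matrix ι ι ℝ) (ξ : ι → ℝ) (X Y Z : ι) :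
    shiftTensor a ξ X Y Z = shiftTensor a ξ Y X Z := by
  unfold shiftTensor
  rw [Finset.sum_congr rfl fun β _ =>
    show (a β *ᵥ ξ) X * a β Y Z + a β X Z * (a β *ᵥ ξ) Y
      = (a β *ᵥ ξ) Y * a β X Z + a β Y Z * (a β *ᵥ ξ) X by ring]
  ring

lemma sum_shiftTensor_mul (a : Fin 3 → Matrix ι ι ℝ) (ξ : ι → ℝ) (α : Fin 3) (X Y Z : ι) :
    ∑ W, shiftTensor a ξ X Y W * a α W Z
      = ξ X * a α Y Z + ξ Y * a α X Z
        - ∑ β, ((a β *ᵥ ξ) X * (a β * a α) Y Z + (a β *ᵥ ξ) Y * (a β * a α) X Z) := by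
  simp only [shiftTensor, Matrix.mul_apply, sub_mul, add_mul, Finset.sum_sub_distrib,
    Finset.sum_add_distrib, Finset.sum_mul, Finset.mul_sum, ite_mul, one_mul, zero_mul,
    mul_ite, mul_one, mul_zero, Finset.sum_ite_eq, Finset.mem_univ, if_true]
  congr 2 <;> exact Finset.sum_comm.trans
    (Finset.sum_congr rfl fun _ _ => Finset.sum_congr rfl fun _ _ => by ring)

lemma sum_mul_shiftTensor (a : Fin 3 → Matrix ι ι ℝ) (ξ : ι → ℝ) (α : Fin 3) (X Y Z : ι) :
    ∑ W, shiftTensor a ξ X W Z * a α Y W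
      = ξ X * a α Y Z + (if X = Z then 1 else 0) * (a α *ᵥ ξ) Y
        - ∑ β, ((a β *ᵥ ξ) X * (a α * a β) Y Z + a β X Z * ((a α * a β) *ᵥ ξ) Y) := by
  simp only [shiftTensor, Matrix.mul_apply, ← mulVec_mulVec, sub_mul, add_mul,
    Finset.sum_sub_distrib, Finset.sum_add_distrib, Finset.sum_mul, Finset.mul_sum, ite_mul,
    one_mul, zero_mul, mul_ite, mul_one, mul_zero, Finset.sum_ite_eq', Finset.mem_univ, if_true,
    Finset.sum_ite_irrel, Finset.sum_const_zero]
  have hξ : ∑ W, ξ W * a α Y W = (a α *ᵥ ξ) Y := by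
    simp only [mulVec, dotProduct, mul_comm]
  have hη : ∀ β, ∑ W, a β X Z * (a β *ᵥ ξ) W * a α Y W = a β X Z * (a α *ᵥ a β *ᵥ ξ) Y := by
    intro β
    simp only [mulVec, dotProduct, Finset.mul_sum, Finset.sum_mul]
    exact Finset.sum_congr rfl fun _ _ => Finset.sum_congr rfl fun _ _ => by ring
  rw [hξ, Finset.sum_comm (s := Finset.univ) (f := fun W β => a β X Z * (a β *ᵥ ξ) W * a α Y W)]
  simp only [hη]
  congr 2
  exact Finset.sum_comm.trans
    (Finset.sum_congr rfl fun _ _ => Finset.sum_congr rfl fun _ _ => by ring)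

lemma IsQuaternionicTriple.mul_apply_sub_mul_apply {a : Fin 3 → Matrix ι ι ℝ}
    (ha : IsQuaternionicTriple a) (α β : Fin 3) (Y Z : ι) :
    (a α * a β) Y Z - (a β * a α) Y Z = 2 * ∑ γ, epsLC α β γ * a γ Y Z := by
  simp only [ha α β, ha β α, Matrix.add_apply, Matrix.sum_apply, Matrix.smul_apply, smul_eq_mul,
    epsLC_swap α β, neg_mul, Finset.sum_neg_distrib, @eq_comm _ β α]
  ring

lemma IsQuaternionicTriple.sum_mulVec_mul_apply_sub {a : Fin 3 → Matrix ι ι ℝ}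
    (ha : IsQuaternionicTriple a) (ξ : ι → ℝ) (α : Fin 3) (X Y Z : ι) :
    ∑ β, ((a β *ᵥ ξ) Y * (a β * a α) X Z - a β X Z * ((a α * a β) *ᵥ ξ) Y)
      = ξ Y * a α X Z - (if X = Z then 1 else 0) * (a α *ᵥ ξ) Y := by
  unfold IsQuaternionicTriple at ha
  simp only [ha, add_mulVec, smul_mulVec, one_mulVec, sum_mulVec, Matrix.add_apply,
    Matrix.smul_apply, Matrix.sum_apply, Matrix.one_apply, Finset.sum_apply, Pi.add_apply,
    Pi.smul_apply, smul_eq_mul, mul_add, Finset.sum_sub_distrib, Finset.sum_add_distrib,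
    Finset.mul_sum, mul_ite, ite_mul, mul_one, mul_zero, one_mul, zero_mul, Finset.sum_ite_eq,
    Finset.sum_ite_eq', Finset.sum_ite_irrel, Finset.sum_const_zero, Finset.mem_univ, if_true]
  have hcycle : ∑ β, ∑ γ, (a β *ᵥ ξ) Y * (epsLC β α γ * a γ X Z)
      = ∑ β, ∑ γ, a β X Z * (epsLC α β γ * (a γ *ᵥ ξ) Y) :=
    Finset.sum_comm.trans (Finset.sum_congr rfl fun β _ => Finset.sum_congr rfl fun γ _ => by
      rw [epsLC_cycle]; ring)
  rw [hcycle]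
  split_ifs <;> ring

lemma connectionTerm_shiftTensor {a : Fin 3 → Matrix ι ι ℝ} (ha : IsQuaternionicTriple a)
    (ξ : ι → ℝ) (α : Fin 3) (X Y Z : ι) :
    connectionTerm a (shiftTensor a ξ) (fun β => a β *ᵥ ξ) α X Y Z = 0 := by
  have hcomm : ∑ β, (a β *ᵥ ξ) X * ((a α * a β) Y Z - (a β * a α) Y Z)
      = 2 * ∑ β, ∑ γ, epsLC α β γ * (a β *ᵥ ξ) X * a γ Y Z := by
    simp only [ha.mul_apply_sub_mul_apply, Finset.mul_sum]
    exact Finset.sum_congr rfl fun β _ => Finset.sum_congr rfl fun γ _ => by ring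
  have hrest := ha.sum_mulVec_mul_apply_sub ξ α X Y Z
  rw [connectionTerm, sum_shiftTensor_mul, sum_mul_shiftTensor, ← hcomm]
  simp only [mul_sub, Finset.sum_sub_distrib, Finset.sum_add_distrib] at hrest ⊢
  linear_combination hrest

end QuaternionicTriple

section PointwiseReduction

open Matrix

variable {n : ℕ}

def tripleAt (J : Fin 3 → Fin n → Fin n → (Fin n → ℝ) → ℝ) (x : Fin n → ℝ) :
    Fin 3 → Matrix (Fin n) (Fin n) ℝ :=
  fun α => Matrix.of fun Y Z => J α Y Z x

@[simp] lemma tripleAt_apply (J : Fin 3 → Fin n → Fin n → (Fin n → ℝ) → ℝ) (x : Fin n → ℝ)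
    (α : Fin 3) (Y Z : Fin n) : tripleAt J x α Y Z = J α Y Z x :=
  rfl

lemma IsAlmostHypercomplexOn.isQuaternionicTriple {J : Fin 3 → Fin n → Fin n → (Fin n → ℝ) → ℝ}
    {U : Set (Fin n → ℝ)} (hJ : IsAlmostHypercomplexOn J U) {x : Fin n → ℝ} (hx : x ∈ U) :
    IsQuaternionicTriple (tripleAt J x) := by
  intro α β
  ext X Z
  simp only [Matrix.mul_apply, tripleAt_apply, hJ.2 α β X Z x hx, Matrix.add_apply,
    Matrix.smul_apply, Matrix.one_apply, Matrix.sum_apply, smul_eq_mul]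

lemma gammaShift_apply (Γ : Fin n → Fin n → Fin n → (Fin n → ℝ) → ℝ)
    (J : Fin 3 → Fin n → Fin n → (Fin n → ℝ) → ℝ) (ξ : Fin n → (Fin n → ℝ) → ℝ) (X Y Z : Fin n)
    (x : Fin n → ℝ) :
    gammaShift Γ J ξ X Y Z x = Γ X Y Z x + shiftTensor (tripleAt J x) (fun W => ξ W x) X Y Z := by
  simp only [gammaShift, shiftTensor, tripleAt_apply, mulVec, dotProduct]
  ring

lemma gammaShift_eq_add (Γ : Fin n → Fin n → Fin n → (Fin n → ℝ) → ℝ)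
    (J : Fin 3 → Fin n → Fin n → (Fin n → ℝ) → ℝ) (ξ : Fin n → (Fin n → ℝ) → ℝ) (x : Fin n → ℝ) :
    (fun X Y Z => gammaShift Γ J ξ X Y Z x)
      = (fun X Y Z => Γ X Y Z x) + shiftTensor (tripleAt J x) (fun W => ξ W x) :=
  funext₃ fun X Y Z => gammaShift_apply Γ J ξ X Y Z x

lemma omegaShift_eq_add (ω : Fin 3 → Fin n → (Fin n → ℝ) → ℝ)
    (J : Fin 3 → Fin n → Fin n → (Fin n → ℝ) → ℝ) (ξ : Fin n → (Fin n → ℝ) → ℝ) (x : Fin n → ℝ) :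
    (fun α X => omegaShift ω J ξ α X x)
      = (fun α X => ω α X x) + fun α => tripleAt J x α *ᵥ fun W => ξ W x :=
  rfl

end PointwiseReduction

theorem stmt_9_general (r : ℕ) (U : Set (Fin (4 * r) → ℝ))
    (J : Fin 3 → Fin (4 * r) → Fin (4 * r) → (Fin (4 * r) → ℝ) → ℝ)
    (hJ : IsAlmostHypercomplexOn J U)
    (Γ : Fin (4 * r) → Fin (4 * r) → Fin (4 * r) → (Fin (4 * r) → ℝ) → ℝ)
    (hΓsym : ∀ X Y Z, ∀ x ∈ U, Γ X Y Z x = Γ Y X Z x)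
    (ω : Fin 3 → Fin (4 * r) → (Fin (4 * r) → ℝ) → ℝ)
    (hcov : ∀ α X Y Z, ∀ x ∈ U,
      pd X (J α Y Z) x
        - (∑ W, Γ X Y W x * J α W Z x)
        + (∑ W, Γ X W Z x * J α Y W x)
        + 2 * ∑ β, ∑ γ, epsLC α β γ * ω β X x * J γ Y Z x = 0)
    (ξ : Fin (4 * r) → (Fin (4 * r) → ℝ) → ℝ) :
    (∀ X Y Z, ∀ x ∈ U, gammaShift Γ J ξ X Y Z x = gammaShift Γ J ξ Y X Z x) ∧
    (∀ α X Y Z, ∀ x ∈ U,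
      pd X (J α Y Z) x
        - (∑ W, gammaShift Γ J ξ X Y W x * J α W Z x)
        + (∑ W, gammaShift Γ J ξ X W Z x * J α Y W x)
        + 2 * ∑ β, ∑ γ, epsLC α β γ * omegaShift ω J ξ β X x * J γ Y Z x = 0) := by
  refine ⟨fun X Y Z x hx => ?_, fun α X Y Z x hx => ?_⟩
  · rw [gammaShift_apply, gammaShift_apply, hΓsym X Y Z x hx, shiftTensor_comm]
  · have hold : pd X (J α Y Z) x + connectionTerm (tripleAt J x)
        (fun X Y Z => Γ X Y Z x) (fun β X => ω β X x) α X Y Z = 0 := by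
      rw [← hcov α X Y Z x hx]
      simp only [connectionTerm, tripleAt_apply]
      ring
    have hnew : pd X (J α Y Z) x + connectionTerm (tripleAt J x)
        (fun X Y Z => gammaShift Γ J ξ X Y Z x) (fun β X => omegaShift ω J ξ β X x) α X Y Z
          = 0 := by
      rw [gammaShift_eq_add, omegaShift_eq_add, connectionTerm_add,
        connectionTerm_shiftTensor (hJ.isQuaternionicTriple hx), add_zero, hold]
    rw [← hnew]
    simp only [connectionTerm, tripleAt_apply]
    ring

/-- the quaternionic covariant-constancy condition is preserved by the shift
`(Γ, ω) ↦ (Γ', ω')` by an arbitrary smooth one-form `ξ`, and `Γ'` is again symmetric. -/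
theorem stmt_9 (r : ℕ) (U : Set (Fin (4 * r) → ℝ)) (hU : IsOpen U)
    (J : Fin 3 → Fin (4 * r) → Fin (4 * r) → (Fin (4 * r) → ℝ) → ℝ)
    (hJ : IsAlmostHypercomplexOn J U)
    (Γ : Fin (4 * r) → Fin (4 * r) → Fin (4 * r) → (Fin (4 * r) → ℝ) → ℝ)
    (hΓsym : ∀ X Y Z, ∀ x ∈ U, Γ X Y Z x = Γ Y X Z x)
    (ω : Fin 3 → Fin (4 * r) → (Fin (4 * r) → ℝ) → ℝ)
    (hcov : ∀ α X Y Z, ∀ x ∈ U,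
      pd X (J α Y Z) x
        - (∑ W, Γ X Y W x * J α W Z x)
        + (∑ W, Γ X W Z x * J α Y W x)
        + 2 * ∑ β, ∑ γ, epsLC α β γ * ω β X x * J γ Y Z x = 0)
    (ξ : Fin (4 * r) → (Fin (4 * r) → ℝ) → ℝ)
    (hξsmooth : ∀ W, ContDiffOn ℝ (⊤ : ℕ∞) (ξ W) U) :
    (∀ X Y Z, ∀ x ∈ U, gammaShift Γ J ξ X Y Z x = gammaShift Γ J ξ Y X Z x) ∧
    (∀ α X Y Z, ∀ x ∈ U,
      pd X (J α Y Z) x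
        - (∑ W, gammaShift Γ J ξ X Y W x * J α W Z x)
        + (∑ W, gammaShift Γ J ξ X W Z x * J α Y W x)
        + 2 * ∑ β, ∑ γ, epsLC α β γ * omegaShift ω J ξ β X x * J γ Y Z x = 0) :=
  stmt_9_general r U J hJ Γ hΓsym ω hcov ξ
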